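/- arXiv:1705.02088 — 4 statements merged into one kernel-verified Lean document; each statement's English description precedes it below -/
import Mathlib

section
/- If s : ℝ → ℂ is differentiable, satisfies s′(x) − x·s(x) = 0 for every x ∈ ℝ, and is square-integrable with respect to Lebesgue measure on ℝ, then s is identically zero. -/
/-!
Since `s' = x s`, the product `s(x) e^{-x²/2}` has derivative zero, so it is a constant `c`.
Then `‖s(x)‖ = ‖c‖ e^{x²/2} ≥ ‖c‖` everywhere, and a function in `L^p` (`0 < p < ∞`) of a
measure of infinite total mass cannot be bounded below by a nonzero constant; hence `c = 0`.
-/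

open MeasureTheory

theorem MeasureTheory.MemLp.eq_zero_of_forall_norm_le {α E F : Type*} [MeasurableSpace α]
    {μ : Measure α} [NormedAddCommGroup E] [NormedAddCommGroup F] {p : ENNReal} {f : α → F} (c : E)
    (hf : MemLp f p μ) (hp0 : p ≠ 0) (hptop : p ≠ ⊤) (hμ : μ Set.univ = ⊤)
    (hc : ∀ x, ‖c‖ ≤ ‖f x‖) : c = 0 := by
  have hconst : MemLp (fun _ : α => c) p μ :=
    hf.of_le aestronglyMeasurable_const (ae_of_all _ hc)
  simpa [hμ] using (memLp_const_iff hp0 hptop).mp hconst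

theorem mul_cexp_neg_eq_of_hasDerivAt {s φ φ' : ℝ → ℂ} (hφ : ∀ x, HasDerivAt φ (φ' x) x)
    (hs : ∀ x, HasDerivAt s (φ' x * s x) x) (x y : ℝ) :
    s x * Complex.exp (-φ x) = s y * Complex.exp (-φ y) := by
  have hderiv : ∀ z, HasDerivAt (fun t => s t * Complex.exp (-φ t)) 0 z := fun z =>
    ((hs z).fun_mul (hφ z).fun_neg.cexp).congr_deriv (by ring)
  exact is_const_of_deriv_eq_zero (fun z => (hderiv z).differentiableAt)
    (fun z => (hderiv z).deriv) x y

theorem hasDerivAt_ofReal_sq_div_two (x : ℝ) :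
    HasDerivAt (fun t : ℝ => (t : ℂ) ^ 2 / 2) (x : ℂ) x := by
  simpa using ((hasDerivAt_id x).ofReal_comp.fun_pow 2).div_const 2

theorem norm_cexp_neg_ofReal_sq_div_two_le_one (x : ℝ) :
    ‖Complex.exp (-((x : ℂ) ^ 2 / 2))‖ ≤ 1 := by
  rw [Complex.norm_exp, Real.exp_le_one_iff]
  norm_cast
  linarith [sq_nonneg x]

/-- If `s : ℝ → ℂ` is differentiable, satisfies `s′(x) − x·s(x) = 0` for
every `x ∈ ℝ`, and is square-integrable with respect to Lebesgue measure on `ℝ`, then `s`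
is identically zero. -/
theorem degree_one_ode_L2_vanishing (s : ℝ → ℂ) (hs : Differentiable ℝ s)
    (heq : ∀ x : ℝ, deriv s x - (x : ℂ) * s x = 0)
    (hL2 : MemLp s 2 volume) :
    ∀ x : ℝ, s x = 0 := by
  intro y
  have hsol : ∀ x : ℝ, HasDerivAt s ((x : ℂ) * s x) x := fun x => by
    simpa [sub_eq_zero.mp (heq x)] using (hs x).hasDerivAt
  have hbound : ∀ x, ‖s y * Complex.exp (-((y : ℂ) ^ 2 / 2))‖ ≤ ‖s x‖ := fun x => by
    rw [← mul_cexp_neg_eq_of_hasDerivAt hasDerivAt_ofReal_sq_div_two hsol x y, norm_mul]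
    exact mul_le_of_le_one_right (norm_nonneg _) (norm_cexp_neg_ofReal_sq_div_two_le_one x)
  have hc :=
    hL2.eq_zero_of_forall_norm_le _ two_ne_zero ENNReal.ofNat_ne_top Real.volume_univ hbound
  exact (mul_eq_zero.mp hc).resolve_right (Complex.exp_ne_zero _)
end

section
/- For every smooth compactly supported function s : ℝⁿ → ⋀ℂⁿ one has ∫_{ℝⁿ} ‖(D s − i (c∘i) s)(x)‖² dx ≥ ∫_{ℝⁿ} ‖(D s)(x)‖² dx + ∫_{ℝⁿ} (‖x‖² − n)·‖s(x)‖² dx; that is, in the sense of quadratic forms, (D − i c∘i)² ≥ D² + ‖x‖² − n. -/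
open MeasureTheory
open scoped BigOperators

noncomputable section

/-- The exterior algebra `⋀ℂⁿ`, realized as the space of coefficient functions with
respect to the basis `(e_S)` indexed by subsets `S ⊆ {1, …, n}` (with `e_S` the ordered
wedge of the standard basis vectors indexed by `S`). -/
abbrev Lam (n : ℕ) := Finset (Fin n) → ℂ

/-- The sign `(−1)^{#{i ∈ S : i < j}}`. -/
def esign {n : ℕ} (S : Finset (Fin n)) (j : Fin n) : ℂ :=
  (-1 : ℂ) ^ (S.filter (fun i => i < j)).card

/-- Exterior (wedge) multiplication `ω ↦ e_j ∧ ω` by the `j`-th standard basis vector. -/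
def wedgeB {n : ℕ} (j : Fin n) (a : Lam n) : Lam n :=
  fun S => if j ∈ S then esign (S.erase j) j * a (S.erase j) else 0

/-- Interior multiplication (contraction) `ι_{e_j}` by the `j`-th standard basis
covector `⟨e_j, ·⟩`. -/
def iotaB {n : ℕ} (j : Fin n) (a : Lam n) : Lam n :=
  fun S => if j ∈ S then 0 else esign S j * a (insert j S)

/-- The Clifford action `c(v)ω = v ∧ ω − ι_v ω` of `v ∈ ℂⁿ` on `⋀ℂⁿ`, where `ι_v` is
contraction by the linear functional `⟨v, ·⟩` (conjugate-linear in `v`). -/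
def cl {n : ℕ} (v : Fin n → ℂ) (a : Lam n) : Lam n :=
  fun S => ∑ j, (v j * wedgeB j a S - (starRingEnd ℂ) (v j) * iotaB j a S)

/-- The Dirac operator `(D s)(x) = Σ_j c(e_j) (∂s/∂x_j)(x)` on functions `ℝⁿ → ⋀ℂⁿ`. -/
def dirac {n : ℕ} (s : (Fin n → ℝ) → Lam n) (x : Fin n → ℝ) : Lam n :=
  ∑ j, cl (Pi.single j 1) (fderiv ℝ s x (Pi.single j 1))

/-- The deformation term `((c∘i)s)(x) = c(i x) s(x)`, regarding `x ∈ ℝⁿ ⊂ ℂⁿ`. -/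
def clI {n : ℕ} (s : (Fin n → ℝ) → Lam n) (x : Fin n → ℝ) : Lam n :=
  cl (fun j => Complex.I * (x j : ℂ)) (s x)

/-- The squared pointwise norm `‖a‖² = Σ_S |a_S|²` on `⋀ℂⁿ`, for the Hermitian inner
product induced by the standard inner product on `ℂⁿ`. -/
def lamNormSq {n : ℕ} (a : Lam n) : ℝ := ∑ S, ‖a S‖ ^ 2


namespace DiracAux


variable {n : ℕ}

lemma esign_sq (S : Finset (Fin n)) (j : Fin n) : esign S j * esign S j = 1 := by
  unfold esign; rw [← mul_pow]; norm_num

lemma wedge_iota_same (j : Fin n) (a : Lam n) :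
    wedgeB j (iotaB j a) = fun S => if j ∈ S then a S else 0 := by
  funext S
  unfold wedgeB iotaB
  by_cases hj : j ∈ S
  · simp only [hj, if_pos, Finset.notMem_erase, if_neg, if_false, ite_true]
    rw [Finset.insert_erase hj, ← mul_assoc, esign_sq, one_mul]
  · simp [hj]

lemma iota_wedge_same (j : Fin n) (a : Lam n) :
    iotaB j (wedgeB j a) = fun S => if j ∈ S then 0 else a S := by
  funext S
  unfold iotaB wedgeB
  by_cases hj : j ∈ S
  · simp [hj]
  · simp only [hj, if_neg, if_false, Finset.mem_insert, true_or, ite_true, if_pos rfl]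
    rw [Finset.erase_insert hj, ← mul_assoc, esign_sq, one_mul]

lemma wedge_wedge_same (j : Fin n) (a : Lam n) : wedgeB j (wedgeB j a) = fun _ => 0 := by
  funext S
  unfold wedgeB
  by_cases hj : j ∈ S <;> simp [hj, Finset.notMem_erase]

lemma iota_iota_same (j : Fin n) (a : Lam n) : iotaB j (iotaB j a) = fun _ => 0 := by
  funext S
  unfold iotaB
  by_cases hj : j ∈ S <;> simp [hj]


variable {n : ℕ}

lemma esign_insert {k : Fin n} {S : Finset (Fin n)} (h : k ∉ S) (j : Fin n) :
    esign (insert k S) j = (if k < j then -1 else 1) * esign S j := by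
  unfold esign
  rw [Finset.filter_insert]
  by_cases hkj : k < j
  · rw [if_pos hkj, if_pos hkj, Finset.card_insert_of_notMem (by simp [h]), pow_succ]
    ring
  · rw [if_neg hkj, if_neg hkj, one_mul]

lemma esign_comm {j k : Fin n} (h : j ≠ k) (T : Finset (Fin n)) (hj : j ∉ T) (hk : k ∉ T) :
    esign (insert k T) j * esign T k = -(esign (insert j T) k * esign T j) := by
  rw [esign_insert hk j, esign_insert hj k]
  rcases h.lt_or_gt with hlt | hlt
  · rw [if_neg (asymm hlt), if_pos hlt]; ring
  · rw [if_pos hlt, if_neg (asymm hlt)]; ring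

lemma esign_comm' {j k : Fin n} (h : j ≠ k) (T : Finset (Fin n)) (hj : j ∉ T) (hk : k ∉ T) :
    esign (insert k T) j * esign (insert j T) k = -(esign T k * esign T j) := by
  rw [esign_insert hk j, esign_insert hj k]
  rcases h.lt_or_gt with hlt | hlt
  · rw [if_neg (asymm hlt), if_pos hlt]; ring
  · rw [if_pos hlt, if_neg (asymm hlt)]; ring

lemma wedge_wedge {j k : Fin n} (h : j ≠ k) (a : Lam n) :
    wedgeB j (wedgeB k a) = fun S => -(wedgeB k (wedgeB j a) S) := by
  funext S
  unfold wedgeB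
  by_cases hj : j ∈ S
  · by_cases hk : k ∈ S
    · have hkj : k ∈ S.erase j := Finset.mem_erase.2 ⟨Ne.symm h, hk⟩
      have hjk : j ∈ S.erase k := Finset.mem_erase.2 ⟨h, hj⟩
      simp only [hj, hk, hkj, hjk, if_true]
      set T := (S.erase j).erase k with hT
      have hT' : (S.erase k).erase j = T := by rw [hT, Finset.erase_right_comm]
      have h1 : S.erase j = insert k T := by rw [hT, Finset.insert_erase hkj]
      have h2 : S.erase k = insert j T := by rw [← hT', Finset.insert_erase hjk]
      have hjT : j ∉ T := by simp [hT, Finset.mem_erase]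
      have hkT : k ∉ T := by simp [hT]
      rw [hT', h1, h2]
      have hcomm := esign_comm h T hjT hkT
      linear_combination (a T) * hcomm
    · have : k ∉ S.erase j := fun hc => hk (Finset.mem_of_mem_erase hc)
      simp [hj, hk, this]
  · by_cases hk : k ∈ S
    · have : j ∉ S.erase k := fun hc => hj (Finset.mem_of_mem_erase hc)
      simp [hj, hk, this]
    · simp [hj, hk]

lemma iota_iota {j k : Fin n} (h : j ≠ k) (a : Lam n) :
    iotaB j (iotaB k a) = fun S => -(iotaB k (iotaB j a) S) := by
  funext S
  unfold iotaB
  by_cases hj : j ∈ S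
  · by_cases hk : k ∈ S <;> simp [hj, hk, Finset.mem_insert, h, h.symm]
  · by_cases hk : k ∈ S
    · simp [hj, hk, Finset.mem_insert, h, h.symm]
    · have hji : j ∉ insert k S := by simp [hj, h]
      have hki : k ∉ insert j S := by simp [hk, h.symm]
      simp only [hj, hk, hji, hki, if_neg, if_false, ite_false]
      have hins : insert k (insert j S) = insert j (insert k S) := Finset.insert_comm _ _ _
      rw [hins]
      have hcomm := esign_comm h S hj hk
      linear_combination (a (insert j (insert k S))) * hcomm

lemma iota_wedge {j k : Fin n} (h : j ≠ k) (a : Lam n) :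
    iotaB j (wedgeB k a) = fun S => -(wedgeB k (iotaB j a) S) := by
  funext S
  unfold iotaB wedgeB
  by_cases hj : j ∈ S
  · by_cases hk : k ∈ S
    · simp [hj, hk, Finset.mem_erase, h]
    · simp [hj, hk, Finset.mem_erase, h]
  · by_cases hk : k ∈ S
    · have hki : k ∈ insert j S := Finset.mem_insert_of_mem hk
      have hje : j ∉ S.erase k := fun hc => hj (Finset.mem_of_mem_erase hc)
      simp only [hj, hk, hki, hje, if_true, if_false, ite_true, ite_false, if_neg]
      set T := S.erase k with hT
      have hkT : k ∉ T := Finset.notMem_erase _ _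
      have hjT : j ∉ T := hje
      have h2 : S = insert k T := (Finset.insert_erase hk).symm
      have h3 : (insert j S).erase k = insert j T := by
        rw [Finset.erase_insert_of_ne h, ← hT]
      rw [h3, h2]
      have hcomm := esign_comm' h T hjT hkT
      linear_combination (a (insert j T)) * hcomm
    · have : k ∉ insert j S := by simp [hk, h.symm]
      simp [hj, hk, this]

lemma esign_conj {S : Finset (Fin n)} {j : Fin n} : (starRingEnd ℂ) (esign S j) = esign S j := by
  unfold esign; rw [map_pow, map_neg, map_one]

/-- The Hermitian inner product on `Lam n`. -/
def herm (a b : Lam n) : ℂ := ∑ S, (starRingEnd ℂ) (a S) * b S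

lemma herm_conj (a b : Lam n) : (starRingEnd ℂ) (herm a b) = herm b a := by
  unfold herm
  rw [map_sum]
  refine Finset.sum_congr rfl fun S _ => ?_
  simp [mul_comm]

def flipj (j : Fin n) (S : Finset (Fin n)) : Finset (Fin n) :=
  if j ∈ S then S.erase j else insert j S

lemma flipj_invol (j : Fin n) : Function.Involutive (flipj j) := by
  intro S
  unfold flipj
  by_cases hj : j ∈ S
  · simp [hj, Finset.notMem_erase, Finset.insert_erase hj]
  · simp [hj, Finset.erase_insert hj]

lemma herm_wedge_left (j : Fin n) (a b : Lam n) :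
    herm (wedgeB j a) b = herm a (iotaB j b) := by
  refine (Fintype.sum_bijective (flipj j) (flipj_invol j).bijective _ _ fun S => ?_).symm
  unfold flipj wedgeB iotaB
  by_cases hj : j ∈ S
  · simp [hj, Finset.notMem_erase]
  · simp only [hj, if_false, ite_false, Finset.mem_insert, true_or, if_true, ite_true,
      Finset.erase_insert hj, map_mul, esign_conj]
    ring

lemma herm_iota_left (j : Fin n) (a b : Lam n) :
    herm (iotaB j a) b = herm a (wedgeB j b) := by
  have h := congrArg (starRingEnd ℂ) (herm_wedge_left j b a)
  rw [herm_conj, herm_conj] at h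
  exact h.symm

/-- `B_j = e_j ∧ · − ι_j`, the (anti-self-adjoint) Clifford generator. -/
def bo (j : Fin n) (a : Lam n) : Lam n := fun S => wedgeB j a S - iotaB j a S
/-- `A_j = e_j ∧ · + ι_j`, the self-adjoint partner. -/
def ao (j : Fin n) (a : Lam n) : Lam n := fun S => wedgeB j a S + iotaB j a S

lemma herm_add_right (a u v : Lam n) : herm a (fun S => u S + v S) = herm a u + herm a v := by
  unfold herm; rw [← Finset.sum_add_distrib]; exact Finset.sum_congr rfl fun S _ => by ring

lemma herm_sub_right (a u v : Lam n) : herm a (fun S => u S - v S) = herm a u - herm a v := by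
  unfold herm; rw [← Finset.sum_sub_distrib]; exact Finset.sum_congr rfl fun S _ => by ring

lemma herm_neg_right (a u : Lam n) : herm a (fun S => -(u S)) = -herm a u := by
  unfold herm; rw [← Finset.sum_neg_distrib]; exact Finset.sum_congr rfl fun S _ => by ring

lemma herm_add_left (u v b : Lam n) : herm (fun S => u S + v S) b = herm u b + herm v b := by
  unfold herm; rw [← Finset.sum_add_distrib]
  exact Finset.sum_congr rfl fun S _ => by rw [map_add]; ring

lemma herm_sub_left (u v b : Lam n) : herm (fun S => u S - v S) b = herm u b - herm v b := by
  unfold herm; rw [← Finset.sum_sub_distrib]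
  exact Finset.sum_congr rfl fun S _ => by rw [map_sub]; ring

lemma herm_ao_left (j : Fin n) (a b : Lam n) : herm (ao j a) b = herm a (ao j b) := by
  unfold ao
  rw [herm_add_left, herm_wedge_left, herm_iota_left, ← herm_add_right]
  exact congrArg (herm a) (funext fun S => add_comm _ _)

lemma herm_bo_left (j : Fin n) (a b : Lam n) : herm (bo j a) b = -herm a (bo j b) := by
  unfold bo
  rw [herm_sub_left, herm_wedge_left, herm_iota_left, ← herm_sub_right]
  rw [show (fun S => iotaB j b S - wedgeB j b S) = fun S => -(wedgeB j b S - iotaB j b S) by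
    funext S; ring, herm_neg_right]

lemma wedgeB_add (j : Fin n) (u v : Lam n) (S : Finset (Fin n)) :
    wedgeB j (fun T => u T + v T) S = wedgeB j u S + wedgeB j v S := by
  unfold wedgeB; split_ifs <;> ring

lemma iotaB_add (j : Fin n) (u v : Lam n) (S : Finset (Fin n)) :
    iotaB j (fun T => u T + v T) S = iotaB j u S + iotaB j v S := by
  unfold iotaB; split_ifs <;> ring

lemma wedgeB_sub (j : Fin n) (u v : Lam n) (S : Finset (Fin n)) :
    wedgeB j (fun T => u T - v T) S = wedgeB j u S - wedgeB j v S := by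
  unfold wedgeB; split_ifs <;> ring

lemma iotaB_sub (j : Fin n) (u v : Lam n) (S : Finset (Fin n)) :
    iotaB j (fun T => u T - v T) S = iotaB j u S - iotaB j v S := by
  unfold iotaB; split_ifs <;> ring


lemma ao_ao_same (j : Fin n) (a : Lam n) : ao j (ao j a) = a := by
  funext S
  unfold ao
  rw [wedgeB_add, iotaB_add]
  rw [congrFun (wedge_wedge_same j a) S, congrFun (iota_iota_same j a) S,
    congrFun (wedge_iota_same j a) S, congrFun (iota_wedge_same j a) S]
  by_cases hj : j ∈ S <;> simp [hj]

lemma ao_ao_ne {j k : Fin n} (h : j ≠ k) (a : Lam n) : ao j (ao k a) = fun S => -(ao k (ao j a) S) := by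
  funext S
  unfold ao
  rw [wedgeB_add, iotaB_add, wedgeB_add, iotaB_add]
  rw [congrFun (wedge_wedge h a) S, congrFun (iota_iota h a) S,
    congrFun (iota_wedge h a) S, congrFun (iota_wedge (Ne.symm h) a) S]
  ring

lemma bo_ao (j k : Fin n) (a : Lam n) : bo j (ao k a) = fun S => -(ao k (bo j a) S) := by
  funext S
  unfold bo ao
  rw [wedgeB_add, iotaB_add, wedgeB_sub, iotaB_sub]
  by_cases h : j = k
  · subst h
    rw [congrFun (wedge_wedge_same j a) S, congrFun (iota_iota_same j a) S]
    ring
  · rw [congrFun (wedge_wedge h a) S, congrFun (iota_iota h a) S,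
      congrFun (iota_wedge h a) S, congrFun (iota_wedge (Ne.symm h) a) S]
    ring

lemma bo_ao_same (j : Fin n) (a : Lam n) :
    bo j (ao j a) = fun S => if j ∈ S then a S else -(a S) := by
  funext S
  unfold bo ao
  rw [wedgeB_add, iotaB_add]
  rw [congrFun (wedge_wedge_same j a) S, congrFun (iota_iota_same j a) S,
    congrFun (wedge_iota_same j a) S, congrFun (iota_wedge_same j a) S]
  by_cases hj : j ∈ S <;> simp [hj]


/-- `X(x) = Σ_k x_k A_k`, the multiplication/deformation operator. -/
def xop (x : Fin n → ℝ) (a : Lam n) : Lam n := fun S => ∑ k, (x k : ℂ) * ao k a S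

def wedgeLM (j : Fin n) : Lam n →ₗ[ℝ] Lam n where
  toFun := wedgeB j
  map_add' a b := by funext S; exact wedgeB_add j a b S
  map_smul' r a := by
    funext S
    unfold wedgeB
    simp only [Pi.smul_apply, RingHom.id_apply]
    split_ifs
    · rw [mul_smul_comm]
    · rw [smul_zero]

def iotaLM (j : Fin n) : Lam n →ₗ[ℝ] Lam n where
  toFun := iotaB j
  map_add' a b := by funext S; exact iotaB_add j a b S
  map_smul' r a := by
    funext S
    unfold iotaB
    simp only [Pi.smul_apply, RingHom.id_apply]
    split_ifs
    · rw [smul_zero]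
    · rw [mul_smul_comm]

def boCLM (j : Fin n) : Lam n →L[ℝ] Lam n :=
  LinearMap.toContinuousLinearMap (wedgeLM j - iotaLM j)

def aoCLM (j : Fin n) : Lam n →L[ℝ] Lam n :=
  LinearMap.toContinuousLinearMap (wedgeLM j + iotaLM j)

lemma boCLM_apply (j : Fin n) (a : Lam n) : boCLM j a = bo j a := rfl

lemma aoCLM_apply (j : Fin n) (a : Lam n) : aoCLM j a = ao j a := rfl

def hermLM2 (a : Lam n) : Lam n →ₗ[ℝ] ℂ where
  toFun := herm a
  map_add' u v := herm_add_right a u v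
  map_smul' r u := by
    simp only [RingHom.id_apply]
    unfold herm
    rw [Finset.smul_sum]
    exact Finset.sum_congr rfl fun S _ => by rw [Pi.smul_apply, mul_smul_comm]

def hermCLM : Lam n →L[ℝ] Lam n →L[ℝ] ℂ :=
  LinearMap.toContinuousLinearMap
  { toFun := fun a => LinearMap.toContinuousLinearMap (hermLM2 a)
    map_add' := fun a b => by
      ext u
      exact herm_add_left a b u
    map_smul' := fun r a => by
      ext u
      show herm (r • a) u = r • herm a u
      unfold herm
      rw [Finset.smul_sum]
      refine Finset.sum_congr rfl fun S _ => ?_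
      simp only [Pi.smul_apply, Complex.real_smul, map_mul, Complex.conj_ofReal]
      ring }

lemma hermCLM_apply (a b : Lam n) : hermCLM a b = herm a b := rfl

def xopCLM : (Fin n → ℝ) →L[ℝ] (Lam n →L[ℝ] Lam n) :=
  LinearMap.toContinuousLinearMap
  { toFun := fun x => ∑ k, x k • aoCLM k
    map_add' := fun x y => by
      simp only [Pi.add_apply]
      rw [← Finset.sum_add_distrib]
      refine Finset.sum_congr rfl fun k _ => ?_
      ext a S
      simp only [ContinuousLinearMap.add_apply, ContinuousLinearMap.coe_smul', Pi.add_apply, Pi.smul_apply,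
        Complex.real_smul, Complex.ofReal_add]
      ring
    map_smul' := fun r x => by
      simp only [Pi.smul_apply, RingHom.id_apply, smul_smul, Finset.smul_sum, smul_eq_mul] }

lemma xopCLM_apply (x : Fin n → ℝ) (a : Lam n) : xopCLM x a = xop x a := by
  funext S
  show (∑ k, x k • aoCLM k) a S = _
  simp only [ContinuousLinearMap.sum_apply, ContinuousLinearMap.coe_smul',
    Pi.smul_apply, Finset.sum_apply, aoCLM_apply]
  exact Finset.sum_congr rfl fun k _ => Complex.real_smul


lemma herm_sum_left {m : Type*} [Fintype m] (u : m → Lam n) (b : Lam n) :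
    herm (fun S => ∑ j, u j S) b = ∑ j, herm (u j) b := by
  unfold herm
  rw [Finset.sum_comm]
  refine Finset.sum_congr rfl fun S _ => ?_
  rw [map_sum, Finset.sum_mul]

lemma herm_xop_right (x : Fin n → ℝ) (a b : Lam n) :
    herm a (xop x b) = ∑ k, (x k : ℂ) * herm a (ao k b) := by
  unfold herm xop
  rw [Finset.sum_congr rfl fun S (_ : S ∈ Finset.univ) => Finset.mul_sum Finset.univ
    (fun k => (x k : ℂ) * ao k b S) ((starRingEnd ℂ) (a S)), Finset.sum_comm]
  refine Finset.sum_congr rfl fun k _ => ?_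
  rw [Finset.mul_sum]
  exact Finset.sum_congr rfl fun S _ => by ring

lemma herm_xop_left (x : Fin n → ℝ) (a b : Lam n) :
    herm (xop x a) b = ∑ k, (x k : ℂ) * herm (ao k a) b := by
  unfold herm xop
  rw [Finset.sum_congr rfl fun S (_ : S ∈ Finset.univ) => by
    rw [map_sum, Finset.sum_mul]]
  rw [Finset.sum_comm]
  refine Finset.sum_congr rfl fun k _ => ?_
  rw [Finset.mul_sum]
  refine Finset.sum_congr rfl fun S _ => ?_
  simp only [map_mul, Complex.conj_ofReal]
  ring

lemma herm_ao_pair (j k : Fin n) (a : Lam n) :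
    herm (ao j a) (ao k a) + herm (ao k a) (ao j a) = if j = k then 2 * herm a a else 0 := by
  by_cases h : j = k
  · subst h
    rw [if_pos rfl, herm_ao_left, ao_ao_same]
    ring
  · rw [if_neg h, herm_ao_left j, ao_ao_ne h, herm_neg_right, herm_ao_left k]
    ring

lemma herm_xop_xop (x : Fin n → ℝ) (a : Lam n) :
    herm (xop x a) (xop x a) = ((∑ i, x i ^ 2 : ℝ) : ℂ) * herm a a := by
  have e1 : herm (xop x a) (xop x a)
      = ∑ k, ∑ l, (x k : ℂ) * (x l : ℂ) * herm (ao k a) (ao l a) := by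
    rw [herm_xop_left]
    refine Finset.sum_congr rfl fun k _ => ?_
    rw [herm_xop_right, Finset.mul_sum]
    exact Finset.sum_congr rfl fun l _ => by ring
  set T := herm (xop x a) (xop x a) with hT
  have hAA : (∑ k, ∑ l, (x k : ℂ) * (x l : ℂ) * herm (ao k a) (ao l a))
      = ∑ k, ∑ l, (x k : ℂ) * (x l : ℂ) * herm (ao l a) (ao k a) := by
    rw [Finset.sum_comm]
    exact Finset.sum_congr rfl fun k _ => Finset.sum_congr rfl fun l _ => by ring
  have e2 : T + T = ∑ k, ∑ l, (x k : ℂ) * (x l : ℂ)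
      * (herm (ao k a) (ao l a) + herm (ao l a) (ao k a)) := by
    rw [e1]
    nth_rewrite 2 [hAA]
    rw [← Finset.sum_add_distrib]
    refine Finset.sum_congr rfl fun k _ => ?_
    rw [← Finset.sum_add_distrib]
    exact Finset.sum_congr rfl fun l _ => by ring
  have e3 : T + T = 2 * (((∑ i, x i ^ 2 : ℝ) : ℂ) * herm a a) := by
    rw [e2]
    have : ∀ k : Fin n, ∑ l, (x k : ℂ) * (x l : ℂ)
        * (herm (ao k a) (ao l a) + herm (ao l a) (ao k a))
        = (x k : ℂ) ^ 2 * (2 * herm a a) := by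
      intro k
      rw [Finset.sum_eq_single k]
      · rw [herm_ao_pair, if_pos rfl]; ring
      · intro l _ hl
        rw [herm_ao_pair]
        rw [if_neg (Ne.symm hl)]
        ring
      · intro h; exact absurd (Finset.mem_univ k) h
    rw [Finset.sum_congr rfl fun k _ => this k]
    push_cast
    rw [Finset.sum_mul, Finset.mul_sum]
    exact Finset.sum_congr rfl fun k _ => by ring
  have := e3
  rw [← two_mul] at this
  exact mul_left_cancel₀ two_ne_zero this

lemma lamNormSq_eq (a : Lam n) : lamNormSq a = (herm a a).re := by
  unfold lamNormSq herm
  rw [Complex.re_sum]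
  refine Finset.sum_congr rfl fun S _ => ?_
  rw [mul_comm, Complex.mul_conj, Complex.ofReal_re, Complex.sq_norm]

lemma re_herm_comm (u v : Lam n) : (herm v u).re = (herm u v).re := by
  rw [← herm_conj u v, Complex.conj_re]

lemma lamNormSq_add (u v : Lam n) :
    lamNormSq (fun S => u S + v S) = lamNormSq u + lamNormSq v + 2 * (herm u v).re := by
  rw [lamNormSq_eq, lamNormSq_eq, lamNormSq_eq]
  rw [herm_add_left, herm_add_right, herm_add_right]
  simp only [Complex.add_re]
  rw [re_herm_comm v u]
  ring

lemma lamNormSq_xop (x : Fin n → ℝ) (a : Lam n) :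
    lamNormSq (xop x a) = (∑ i, x i ^ 2) * lamNormSq a := by
  rw [lamNormSq_eq, herm_xop_xop, lamNormSq_eq]
  exact Complex.re_ofReal_mul _ _

lemma herm_bo_xop (j : Fin n) (x : Fin n → ℝ) (a b : Lam n) :
    herm (bo j a) (xop x b) = herm (xop x a) (bo j b) := by
  rw [herm_xop_right, herm_xop_left]
  refine Finset.sum_congr rfl fun k _ => ?_
  rw [herm_bo_left, bo_ao, herm_neg_right, neg_neg, herm_ao_left]

lemma re_herm_bo_xop (j : Fin n) (x : Fin n → ℝ) (a b : Lam n) :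
    (herm (bo j a) (xop x b)).re = (herm (bo j b) (xop x a)).re := by
  rw [herm_bo_xop]
  exact re_herm_comm _ _

lemma re_herm_bo_ao_self (j : Fin n) (a : Lam n) :
    -(lamNormSq a) ≤ (herm a (bo j (ao j a))).re := by
  rw [bo_ao_same]
  unfold herm lamNormSq
  rw [Complex.re_sum, ← Finset.sum_neg_distrib]
  refine Finset.sum_le_sum fun S _ => ?_
  by_cases hj : j ∈ S
  · simp only [hj, if_pos, ite_true]
    rw [mul_comm, Complex.mul_conj, Complex.ofReal_re, Complex.sq_norm]
    linarith [Complex.normSq_nonneg (a S)]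
  · simp only [hj, ite_false]
    rw [mul_neg, Complex.neg_re, mul_comm, Complex.mul_conj, Complex.ofReal_re,
      Complex.sq_norm]

lemma cl_single (j : Fin n) (a : Lam n) : cl (Pi.single j 1) a = bo j a := by
  funext S
  unfold cl bo
  rw [Finset.sum_eq_single j]
  · simp
  · intro k _ hk
    simp [Pi.single_eq_of_ne hk]
  · intro h; exact absurd (Finset.mem_univ j) h

lemma dirac_eq (s : (Fin n → ℝ) → Lam n) (x : Fin n → ℝ) :
    dirac s x = fun S => ∑ j, bo j (fderiv ℝ s x (Pi.single j 1)) S := by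
  unfold dirac
  funext S
  rw [Finset.sum_apply]
  exact Finset.sum_congr rfl fun j _ => by rw [cl_single]

lemma clI_eq (s : (Fin n → ℝ) → Lam n) (x : Fin n → ℝ) (S : Finset (Fin n)) :
    clI s x S = Complex.I * xop x (s x) S := by
  unfold clI cl xop ao
  rw [Finset.mul_sum]
  refine Finset.sum_congr rfl fun j _ => ?_
  simp only [map_mul, Complex.conj_I, Complex.conj_ofReal]
  ring

lemma sub_eq (s : (Fin n → ℝ) → Lam n) (x : Fin n → ℝ) :
    (dirac s x - Complex.I • clI s x) = fun S => dirac s x S + xop x (s x) S := by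
  funext S
  simp only [Pi.sub_apply, Pi.smul_apply, smul_eq_mul]
  rw [clI_eq]
  have h := Complex.I_mul_I
  linear_combination (-(xop x (s x) S)) * h

lemma key_pointwise (s : (Fin n → ℝ) → Lam n) (x : Fin n → ℝ) :
    lamNormSq (dirac s x - Complex.I • clI s x)
      = lamNormSq (dirac s x) + (∑ i, x i ^ 2) * lamNormSq (s x)
        + 2 * (herm (dirac s x) (xop x (s x))).re := by
  rw [sub_eq, lamNormSq_add, lamNormSq_xop]

lemma herm_dirac_left (s : (Fin n → ℝ) → Lam n) (x : Fin n → ℝ) (b : Lam n) :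
    herm (dirac s x) b = ∑ j, herm (bo j (fderiv ℝ s x (Pi.single j 1))) b := by
  rw [dirac_eq, herm_sum_left]


/-! ### Analytic part -/

section Analysis

variable {s : (Fin n → ℝ) → Lam n}

lemma wedgeB_zero (j : Fin n) : wedgeB j (0 : Lam n) = 0 := by
  funext S; simp [wedgeB]

lemma iotaB_zero (j : Fin n) : iotaB j (0 : Lam n) = 0 := by
  funext S; simp [iotaB]

lemma bo_zero (j : Fin n) : bo j (0 : Lam n) = 0 := by
  funext S; simp [bo, wedgeB, iotaB]

lemma ao_zero (j : Fin n) : ao j (0 : Lam n) = 0 := by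
  funext S; simp [ao, wedgeB, iotaB]

lemma xop_zero (x : Fin n → ℝ) : xop x (0 : Lam n) = 0 := by
  funext S; simp [xop, ao_zero]

lemma herm_zero_left (b : Lam n) : herm 0 b = 0 := by simp [herm]

lemma herm_zero_right (a : Lam n) : herm a 0 = 0 := by simp [herm]

lemma lamNormSq_zero : lamNormSq (0 : Lam n) = 0 := by simp [lamNormSq]

lemma xop_single (j : Fin n) (a : Lam n) : xop (Pi.single j 1) a = ao j a := by
  funext S
  unfold xop
  rw [Finset.sum_eq_single j]
  · simp
  · intro k _ hk
    simp [Pi.single_eq_of_ne hk]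
  · intro h; exact absurd (Finset.mem_univ j) h

/-- Auxiliary function whose divergence produces the cross term. -/
def gfun (s : (Fin n → ℝ) → Lam n) (j : Fin n) (x : Fin n → ℝ) : ℝ :=
  Complex.reCLM (hermCLM (boCLM j (s x)) (xopCLM x (s x)))

/-- The `j`-th directional derivative of `gfun`. -/
def gder (s : (Fin n → ℝ) → Lam n) (j : Fin n) (x : Fin n → ℝ) : ℝ :=
  2 * (herm (bo j (fderiv ℝ s x (Pi.single j 1))) (xop x (s x))).re
    + (herm (bo j (s x)) (ao j (s x))).re

lemma gfun_eq (j : Fin n) (x : Fin n → ℝ) :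
    gfun s j x = (herm (bo j (s x)) (xop x (s x))).re := by
  unfold gfun
  rw [xopCLM_apply]
  rfl

lemma cont_xop_comp {F : (Fin n → ℝ) → Lam n} (hF : Continuous F) :
    Continuous fun x => xop x (F x) := by
  have h : (fun x => xop x (F x)) = fun x => xopCLM x (F x) :=
    funext fun x => (xopCLM_apply _ _).symm
  rw [h]
  exact Continuous.clm_apply xopCLM.continuous hF

lemma cont_herm_re {F G : (Fin n → ℝ) → Lam n} (hF : Continuous F) (hG : Continuous G) :
    Continuous fun x => (herm (F x) (G x)).re := by
  have h : (fun x => (herm (F x) (G x)).re)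
      = fun x => Complex.reCLM (hermCLM (F x) (G x)) := rfl
  rw [h]
  exact Complex.reCLM.continuous.comp ((Continuous.clm_apply (hermCLM.continuous.comp hF) hG))

lemma cont_lamNormSq_comp {F : (Fin n → ℝ) → Lam n} (hF : Continuous F) :
    Continuous fun x => lamNormSq (F x) := by
  unfold lamNormSq
  exact continuous_finset_sum _ fun S _ => ((continuous_apply S).comp hF).norm.pow 2

lemma cont_bo_comp (j : Fin n) {F : (Fin n → ℝ) → Lam n} (hF : Continuous F) :
    Continuous fun x => bo j (F x) := by
  have h : (fun x => bo j (F x)) = fun x => boCLM j (F x) := rfl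
  rw [h]
  exact (boCLM j).continuous.comp hF

lemma cont_ao_comp (j : Fin n) {F : (Fin n → ℝ) → Lam n} (hF : Continuous F) :
    Continuous fun x => ao j (F x) := by
  have h : (fun x => ao j (F x)) = fun x => aoCLM j (F x) := rfl
  rw [h]
  exact (aoCLM j).continuous.comp hF

lemma cont_pdj (hs : ContDiff ℝ (⊤ : ℕ∞) s) (j : Fin n) :
    Continuous fun x => fderiv ℝ s x (Pi.single j 1) :=
  Continuous.clm_apply (hs.continuous_fderiv (by simp)) continuous_const

lemma fderiv_zero_outside {x : Fin n → ℝ} (hx : x ∉ tsupport s) : fderiv ℝ s x = 0 := by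
  by_contra h
  exact hx (support_fderiv_subset ℝ h)

lemma s_zero_outside {x : Fin n → ℝ} (hx : x ∉ tsupport s) : s x = 0 :=
  image_eq_zero_of_notMem_tsupport hx

lemma dirac_bundled :
    (fun x => dirac s x) = fun x => ∑ j, boCLM j (fderiv ℝ s x (Pi.single j 1)) := by
  funext x
  rw [dirac_eq]
  funext S
  rw [Finset.sum_apply]
  rfl

lemma cont_dirac (hs : ContDiff ℝ (⊤ : ℕ∞) s) : Continuous fun x => dirac s x := by
  rw [dirac_bundled]
  exact continuous_finset_sum _ fun j _ => (boCLM j).continuous.comp (cont_pdj hs j)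

lemma dirac_zero_outside {x : Fin n → ℝ} (hx : x ∉ tsupport s) : dirac s x = 0 := by
  rw [dirac_eq]
  funext S
  rw [fderiv_zero_outside hx]
  simp only [ContinuousLinearMap.zero_apply, Finset.sum_apply]
  simp [bo_zero]

end Analysis


section IBP

variable {s : (Fin n → ℝ) → Lam n}

lemma hasLineDerivAt_gfun (hs : ContDiff ℝ (⊤ : ℕ∞) s) (j : Fin n) (x : Fin n → ℝ) :
    HasLineDerivAt ℝ (gfun s j) (gder s j x) x (Pi.single j 1) := by
  set Dx := fderiv ℝ s x with hDx
  have hsd : HasFDerivAt s Dx x := (hs.differentiable (by simp) x).hasFDerivAt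
  have h1 : HasFDerivAt (fun y => boCLM (n := n) j (s y)) ((boCLM j).comp Dx) x :=
    (boCLM j).hasFDerivAt.comp x hsd
  have hc : HasFDerivAt (fun y => hermCLM (boCLM (n := n) j (s y)))
      (hermCLM.comp ((boCLM j).comp Dx)) x := hermCLM.hasFDerivAt.comp x h1
  have hu := (xopCLM (n := n)).hasFDerivAt (x := x) |>.clm_apply hsd
  have h4 := hc.clm_apply hu
  have h5 := Complex.reCLM.hasFDerivAt.comp x h4
  have hline := h5.hasLineDerivAt (Pi.single j 1)
  convert hline using 1
  · rfl
  · rfl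
  · rfl
  simp only [ContinuousLinearMap.coe_comp', Function.comp_apply,
    ContinuousLinearMap.add_apply, ContinuousLinearMap.comp_apply,
    ContinuousLinearMap.flip_apply, ContinuousLinearMap.coe_id', id_eq, map_add,
    Complex.reCLM_apply, Complex.add_re]
  simp only [xopCLM_apply, xop_single, boCLM_apply, hermCLM_apply]
  unfold gder
  rw [re_herm_bo_xop j x (s x) (Dx (Pi.single j 1))]
  ring


lemma cont_gder (hs : ContDiff ℝ (⊤ : ℕ∞) s) (j : Fin n) : Continuous (gder s j) := by
  unfold gder
  exact (continuous_const.mul (cont_herm_re (cont_bo_comp j (cont_pdj hs j))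
    (cont_xop_comp hs.continuous))).add
    (cont_herm_re (cont_bo_comp j hs.continuous) (cont_ao_comp j hs.continuous))

lemma supp_gder (hsupp : HasCompactSupport s) (j : Fin n) : HasCompactSupport (gder s j) := by
  apply HasCompactSupport.intro hsupp
  intro x hx
  unfold gder
  rw [s_zero_outside hx, fderiv_zero_outside hx]
  simp only [ContinuousLinearMap.zero_apply]
  rw [bo_zero, ao_zero, xop_zero, herm_zero_left]
  simp

lemma cont_gfun (hs : ContDiff ℝ (⊤ : ℕ∞) s) (j : Fin n) : Continuous (gfun s j) := by
  unfold gfun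
  exact Complex.reCLM.continuous.comp (Continuous.clm_apply
    (hermCLM.continuous.comp ((boCLM j).continuous.comp hs.continuous))
    (Continuous.clm_apply xopCLM.continuous hs.continuous))

lemma supp_gfun (hsupp : HasCompactSupport s) (j : Fin n) : HasCompactSupport (gfun s j) := by
  apply HasCompactSupport.intro hsupp
  intro x hx
  unfold gfun
  rw [s_zero_outside hx]
  simp

lemma integral_gder_eq_zero (hs : ContDiff ℝ (⊤ : ℕ∞) s) (hsupp : HasCompactSupport s) (j : Fin n) :
    ∫ x, gder s j x = 0 := by
  have hint_gder : Integrable (gder s j) :=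
    (cont_gder hs j).integrable_of_hasCompactSupport (supp_gder hsupp j)
  have hint_gfun : Integrable (gfun s j) :=
    (cont_gfun hs j).integrable_of_hasCompactSupport (supp_gfun hsupp j)
  have h0 := integral_bilinear_hasLineDerivAt_right_eq_neg_left_of_integrable
    (μ := (volume : Measure (Fin n → ℝ))) (B := ContinuousLinearMap.mul ℝ ℝ)
    (f := fun _ => (1 : ℝ)) (f' := fun _ => (0 : ℝ)) (g := gfun s j) (g' := gder s j)
    (v := Pi.single j 1)
    (by simpa using (integrable_zero (Fin n → ℝ) ℝ (volume : Measure (Fin n → ℝ))))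
    (by simp only [ContinuousLinearMap.mul_apply', one_mul]; exact hint_gder)
    (by simp only [ContinuousLinearMap.mul_apply', one_mul]; exact hint_gfun)
    (fun x _ => by simpa using (hasFDerivAt_const (1 : ℝ) x).hasLineDerivAt (Pi.single j 1))
    (fun x _ => hasLineDerivAt_gfun hs j x)
  simpa using h0

end IBP

end DiracAux

open DiracAux in
/-- **Lemma 6.12 of the paper.** For every smooth compactly supported
`s : ℝⁿ → ⋀ℂⁿ`,
`∫ ‖(D − i c∘i)s‖² ≥ ∫ ‖D s‖² + ∫ (‖x‖² − n)·‖s‖²`;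
in the sense of quadratic forms, `(D − i c∘i)² ≥ D² + ‖x‖² − n`. -/
theorem deformed_dirac_square_lower_bound (n : ℕ) (s : (Fin n → ℝ) → Lam n)
    (hs : ContDiff ℝ (⊤ : ℕ∞) s) (hsupp : HasCompactSupport s) :
    (∫ x : Fin n → ℝ, lamNormSq (dirac s x - Complex.I • clI s x)) ≥
      (∫ x : Fin n → ℝ, lamNormSq (dirac s x)) +
        ∫ x : Fin n → ℝ, ((∑ i, x i ^ 2) - (n : ℝ)) * lamNormSq (s x) := by
  classical
  have hcs := hs.continuous
  have hf0 : Integrable (fun x : Fin n → ℝ => lamNormSq (s x)) := by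
    refine (cont_lamNormSq_comp hcs).integrable_of_hasCompactSupport ?_
    refine HasCompactSupport.intro hsupp fun x hx => ?_
    rw [s_zero_outside hx, lamNormSq_zero]
  have hf1 : Integrable (fun x : Fin n → ℝ => lamNormSq (dirac s x)) := by
    refine (cont_lamNormSq_comp (cont_dirac hs)).integrable_of_hasCompactSupport ?_
    refine HasCompactSupport.intro hsupp fun x hx => ?_
    rw [dirac_zero_outside hx, lamNormSq_zero]
  have hcontsq : Continuous fun x : Fin n → ℝ => (∑ i, x i ^ 2 : ℝ) :=
    continuous_finset_sum _ fun i _ => (continuous_apply i).pow 2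
  have hf2 : Integrable (fun x : Fin n → ℝ => (∑ i, x i ^ 2) * lamNormSq (s x)) := by
    refine (hcontsq.mul (cont_lamNormSq_comp hcs)).integrable_of_hasCompactSupport ?_
    refine HasCompactSupport.intro hsupp fun x hx => ?_
    simp only [Pi.mul_apply]
    rw [s_zero_outside hx, lamNormSq_zero, mul_zero]
  have hcr : ∀ j : Fin n, Integrable (fun x : Fin n → ℝ =>
      2 * (herm (bo j (fderiv ℝ s x (Pi.single j 1))) (xop x (s x))).re) := by
    intro j
    refine (continuous_const.mul (cont_herm_re (cont_bo_comp j (cont_pdj hs j))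
      (cont_xop_comp hcs))).integrable_of_hasCompactSupport ?_
    refine HasCompactSupport.intro hsupp fun x hx => ?_
    simp only [Pi.mul_apply]
    rw [fderiv_zero_outside hx]
    simp only [ContinuousLinearMap.zero_apply]
    rw [bo_zero, herm_zero_left]
    simp
  have hrr : ∀ j : Fin n, Integrable (fun x : Fin n → ℝ =>
      (herm (bo j (s x)) (ao j (s x))).re) := by
    intro j
    refine (cont_herm_re (cont_bo_comp j hcs)
      (cont_ao_comp j hcs)).integrable_of_hasCompactSupport ?_
    refine HasCompactSupport.intro hsupp fun x hx => ?_
    rw [s_zero_outside hx, bo_zero, herm_zero_left, Complex.zero_re]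
  have hq : ∀ j : Fin n, Integrable (fun x : Fin n → ℝ =>
      (herm (s x) (bo j (ao j (s x)))).re) := by
    intro j
    refine (cont_herm_re hcs
      (cont_bo_comp j (cont_ao_comp j hcs))).integrable_of_hasCompactSupport ?_
    refine HasCompactSupport.intro hsupp fun x hx => ?_
    rw [s_zero_outside hx, herm_zero_left, Complex.zero_re]
  have hibp : ∀ j : Fin n,
      (∫ x : Fin n → ℝ, 2 * (herm (bo j (fderiv ℝ s x (Pi.single j 1))) (xop x (s x))).re)
        = ∫ x : Fin n → ℝ, (herm (s x) (bo j (ao j (s x)))).re := by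
    intro j
    have h0 := integral_gder_eq_zero hs hsupp j
    have hsplit := integral_add (μ := (volume : Measure (Fin n → ℝ))) (hcr j) (hrr j)
    have h1 : (∫ x : Fin n → ℝ,
        2 * (herm (bo j (fderiv ℝ s x (Pi.single j 1))) (xop x (s x))).re)
        + (∫ x : Fin n → ℝ, (herm (bo j (s x)) (ao j (s x))).re) = 0 := by
      rw [← hsplit]; exact h0
    have h2 : (fun x : Fin n → ℝ => (herm (bo j (s x)) (ao j (s x))).re)
        = fun x => -((herm (s x) (bo j (ao j (s x)))).re) := by
      funext x
      rw [herm_bo_left]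
      simp
    rw [h2, integral_neg] at h1
    linarith
  have hpt : (fun x : Fin n → ℝ => lamNormSq (dirac s x - Complex.I • clI s x))
      = fun x => lamNormSq (dirac s x) + ((∑ i, x i ^ 2) * lamNormSq (s x))
        + ∑ j, 2 * (herm (bo j (fderiv ℝ s x (Pi.single j 1))) (xop x (s x))).re := by
    funext x
    rw [key_pointwise, herm_dirac_left, Complex.re_sum, Finset.mul_sum]
  have hLHS : (∫ x : Fin n → ℝ, lamNormSq (dirac s x - Complex.I • clI s x))
      = (∫ x : Fin n → ℝ, lamNormSq (dirac s x))
        + (∫ x : Fin n → ℝ, (∑ i, x i ^ 2) * lamNormSq (s x))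
        + ∑ j, ∫ x : Fin n → ℝ,
            2 * (herm (bo j (fderiv ℝ s x (Pi.single j 1))) (xop x (s x))).re := by
    rw [hpt]
    have e1 : (∫ x : Fin n → ℝ, (lamNormSq (dirac s x) + (∑ i, x i ^ 2) * lamNormSq (s x)
          + ∑ j, 2 * (herm (bo j (fderiv ℝ s x (Pi.single j 1))) (xop x (s x))).re))
        = (∫ x : Fin n → ℝ, (lamNormSq (dirac s x) + (∑ i, x i ^ 2) * lamNormSq (s x)))
          + ∫ x : Fin n → ℝ,
              ∑ j, 2 * (herm (bo j (fderiv ℝ s x (Pi.single j 1))) (xop x (s x))).re :=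
      integral_add (hf1.add hf2) (integrable_finset_sum _ fun j _ => hcr j)
    refine e1.trans ?_
    exact congrArg₂ (· + ·) (integral_add hf1 hf2)
      (integral_finset_sum _ fun j _ => hcr j)
  have hRHS : (∫ x : Fin n → ℝ, ((∑ i, x i ^ 2) - (n : ℝ)) * lamNormSq (s x))
      = (∫ x : Fin n → ℝ, (∑ i, x i ^ 2) * lamNormSq (s x))
        - n * ∫ x : Fin n → ℝ, lamNormSq (s x) := by
    have he : (fun x : Fin n → ℝ => ((∑ i, x i ^ 2) - (n : ℝ)) * lamNormSq (s x))
        = fun x => (∑ i, x i ^ 2) * lamNormSq (s x) - n * lamNormSq (s x) :=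
      funext fun x => by ring
    rw [he]
    refine (integral_sub hf2 (hf0.const_mul _)).trans ?_
    rw [MeasureTheory.integral_const_mul]
  have hbd : ∀ j : Fin n, -(∫ x : Fin n → ℝ, lamNormSq (s x))
      ≤ ∫ x : Fin n → ℝ, (herm (s x) (bo j (ao j (s x)))).re := by
    intro j
    rw [← integral_neg]
    exact integral_mono hf0.neg (hq j) fun x => re_herm_bo_ao_self j (s x)
  have hsum : -((n : ℝ) * ∫ x : Fin n → ℝ, lamNormSq (s x))
      ≤ ∑ j : Fin n, ∫ x : Fin n → ℝ, (herm (s x) (bo j (ao j (s x)))).re := by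
    have h := Finset.sum_le_sum fun j (_ : j ∈ Finset.univ) => hbd j
    rw [Finset.sum_const, Finset.card_univ, Fintype.card_fin, nsmul_eq_mul] at h
    linarith
  have hcrsum : (∑ j : Fin n, ∫ x : Fin n → ℝ,
        2 * (herm (bo j (fderiv ℝ s x (Pi.single j 1))) (xop x (s x))).re)
      = ∑ j : Fin n, ∫ x : Fin n → ℝ, (herm (s x) (bo j (ao j (s x)))).re :=
    Finset.sum_congr rfl fun j _ => hibp j
  rw [ge_iff_le, hLHS, hRHS, hcrsum]
  linarith
end
end

section
/- Let u, v : ℝ² → ℂ be continuous functions that are 1-periodic in the first variable, differentiable in the second variable, and satisfy ∂u/∂y(x, y) + y·u(x, y) = 0 and ∂v/∂y(x, y) − y·v(x, y) = 0 for all (x, y) ∈ ℝ², and suppose ∫_{[0,1]×ℝ} (|u(x,y)|² + |v(x,y)|²) dx dy < ∞. Then v = 0 and u(x, y) = u(x, 0)·exp(−y²/2) for all (x, y); that is, the L²-kernel of the operator (u, v) ↦ (−∂v/∂y + y·v, ∂u/∂y + y·u) on the cylinder (ℝ/ℤ) × ℝ is the space of functions of the form (x, y) ↦ (g(x)·exp(−y²/2),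 0) with g square-integrable on ℝ/ℤ. -/
/-!
Along each fibre `x = const` the two equations are linear ODEs in `y`, so
`u(x, y) = u(x, 0) e^{-y²/2}` and `v(x, y) = v(x, 0) e^{y²/2}`. By Fubini, for almost every
`x ∈ [0, 1]` the function `y ↦ |v(x, 0)|² e^{y²}` is integrable, which forces `v(x, 0) = 0`;
continuity and periodicity of `v(·, 0)` then give `v(x, 0) = 0` for every `x`.
-/

open MeasureTheory Set

theorem eq_mul_cexp_of_deriv_eq_mul {f : ℝ → ℂ} (hf : Differentiable ℝ f) (c : ℂ)
    (h : ∀ y : ℝ, deriv f y = c * y * f y) (y : ℝ) :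
    f y = f 0 * Complex.exp (c * y ^ 2 / 2) := by
  set φ : ℝ → ℂ := fun y => c * (y : ℂ) ^ 2 / 2
  have hφ (y : ℝ) : HasDerivAt φ (c * y) y := by
    have := (((hasDerivAt_pow 2 (y : ℂ)).const_mul c).div_const 2).comp_ofReal
    convert this using 1; push_cast; ring
  have hG (y : ℝ) : HasDerivAt (fun y => f y * Complex.exp (-φ y)) 0 y := by
    have := (hf y).hasDerivAt.mul (hφ y).neg.cexp
    rw [h] at this
    exact this.congr_deriv (by ring)
  have hconst : f y * Complex.exp (-φ y) = f 0 * Complex.exp (-φ 0) :=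
    is_const_of_deriv_eq_zero (fun z => (hG z).differentiableAt) (fun z => (hG z).deriv) y 0
  simp only [φ, Complex.ofReal_zero] at hconst
  calc f y = f y * Complex.exp (-φ y) * Complex.exp (φ y) := by
        rw [mul_assoc, ← Complex.exp_add, neg_add_cancel, Complex.exp_zero, mul_one]
    _ = _ := by simp [φ, hconst]

theorem eq_zero_of_integrable_mul_exp_sq {c : ℝ}
    (h : Integrable fun y : ℝ => c * Real.exp (y ^ 2)) : c = 0 := by
  by_contra hc
  have h1 : Integrable fun y : ℝ => Real.exp (-(-1) * y ^ 2) := by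
    simpa [hc] using h.const_mul c⁻¹
  exact absurd (integrable_exp_neg_mul_sq_iff.mp h1) (by norm_num)

theorem norm_mul_cexp_sq_div_two_sq (z : ℂ) (y : ℝ) :
    ‖z * Complex.exp (y ^ 2 / 2)‖ ^ 2 = ‖z‖ ^ 2 * Real.exp (y ^ 2) := by
  rw [norm_mul, mul_pow, ← Complex.ofReal_ofNat, ← Complex.ofReal_pow, ← Complex.ofReal_div,
    Complex.norm_exp_ofReal, ← Real.exp_nat_mul]
  norm_num [mul_div_cancel₀]

theorem Function.Periodic.eq_zero_of_ae_eq_zero_on_Icc {E : Type*} [TopologicalSpace E]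
    [T2Space E] [Zero E] {g : ℝ → E} (hg : Continuous g) (hper : Function.Periodic g 1)
    (h : ∀ᵐ x ∂volume.restrict (Icc 0 1), g x = 0) (x : ℝ) : g x = 0 := by
  obtain ⟨x₀, hx₀, hx⟩ := hper.exists_mem_Ico₀ one_pos x
  rw [hx]
  exact Measure.eqOn_Icc_of_ae_eq volume zero_ne_one h hg.continuousOn continuousOn_const
    (Ico_subset_Icc_self hx₀)

theorem MeasureTheory.IntegrableOn.ae_integrable_prod_univ {α β E : Type*} [MeasurableSpace α]
    [MeasurableSpace β] [NormedAddCommGroup E] {μ : Measure α} {ν : Measure β} [SFinite μ]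
    [SFinite ν] {f : α × β → E} {s : Set α} (hf : IntegrableOn f (s ×ˢ univ) (μ.prod ν)) :
    ∀ᵐ x ∂μ.restrict s, Integrable (fun y => f (x, y)) ν := by
  rw [IntegrableOn, ← Measure.prod_restrict, Measure.restrict_univ] at hf
  exact hf.prod_right_ae

theorem L2_kernel_deformed_dirac_on_cylinder_general (u v : ℝ × ℝ → ℂ)
    (hv : Continuous v)
    (hvp : ∀ x y : ℝ, v (x + 1, y) = v (x, y))
    (hud : ∀ x : ℝ, Differentiable ℝ (fun y : ℝ => u (x, y)))
    (hvd : ∀ x : ℝ, Differentiable ℝ (fun y : ℝ => v (x, y)))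
    (hueq : ∀ x y : ℝ, deriv (fun y : ℝ => u (x, y)) y + (y : ℂ) * u (x, y) = 0)
    (hveq : ∀ x y : ℝ, deriv (fun y : ℝ => v (x, y)) y - (y : ℂ) * v (x, y) = 0)
    (hL2 : IntegrableOn (fun p : ℝ × ℝ => ‖u p‖ ^ 2 + ‖v p‖ ^ 2)
      (Set.Icc (0 : ℝ) 1 ×ˢ (Set.univ : Set ℝ)) volume) :
    (∀ p : ℝ × ℝ, v p = 0) ∧
      ∀ x y : ℝ, u (x, y) = u (x, 0) * Complex.exp (-(y : ℂ) ^ 2 / 2) := by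
  have hu_sol (x y : ℝ) : u (x, y) = u (x, 0) * Complex.exp (-(y : ℂ) ^ 2 / 2) := by
    simpa using eq_mul_cexp_of_deriv_eq_mul (hud x) (-1)
      (fun y => by linear_combination hueq x y) y
  have hv_sol (x y : ℝ) : v (x, y) = v (x, 0) * Complex.exp ((y : ℂ) ^ 2 / 2) := by
    simpa using eq_mul_cexp_of_deriv_eq_mul (hvd x) 1
      (fun y => by linear_combination hveq x y) y
  have hv_norm_sq (x y : ℝ) : ‖v (x, y)‖ ^ 2 = ‖v (x, 0)‖ ^ 2 * Real.exp (y ^ 2) := by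
    rw [hv_sol x y, norm_mul_cexp_sq_div_two_sq]
  have hv_sq : IntegrableOn (fun p : ℝ × ℝ => ‖v p‖ ^ 2) (Icc 0 1 ×ˢ univ) volume :=
    hL2.mono' (hv.norm.pow 2).aestronglyMeasurable <| ae_of_all _ fun p => by
      rw [Real.norm_of_nonneg (by positivity)]
      exact le_add_of_nonneg_left (by positivity)
  have hv0_ae : ∀ᵐ x ∂volume.restrict (Icc 0 1), v (x, 0) = 0 := by
    filter_upwards [hv_sq.ae_integrable_prod_univ] with x hx
    simpa using eq_zero_of_integrable_mul_exp_sq (hx.congr (ae_of_all _ (hv_norm_sq x)))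
  have hv0 (x : ℝ) : v (x, 0) = 0 :=
    Function.Periodic.eq_zero_of_ae_eq_zero_on_Icc (g := fun x => v (x, 0)) (by fun_prop)
      (fun x => hvp x 0) hv0_ae x
  exact ⟨fun ⟨x, y⟩ => by rw [hv_sol, hv0, zero_mul], hu_sol⟩

/-- **Subsection 3.7.4 of the paper.** For continuous functions
`u, v : ℝ² → ℂ`, 1-periodic in the first variable, differentiable in the second variable,
satisfying `∂u/∂y + y·u = 0` and `∂v/∂y − y·v = 0` and square-integrable over `[0,1] × ℝ`,
one has `v = 0` and `u(x, y) = u(x, 0)·exp(−y²/2)`: the `L²`-kernel of the operator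
`(u, v) ↦ (−∂v/∂y + y·v, ∂u/∂y + y·u)` on the cylinder `(ℝ/ℤ) × ℝ` consists of the
functions `(x, y) ↦ (g(x)·exp(−y²/2), 0)`. -/
theorem L2_kernel_deformed_dirac_on_cylinder (u v : ℝ × ℝ → ℂ)
    (hu : Continuous u) (hv : Continuous v)
    (hup : ∀ x y : ℝ, u (x + 1, y) = u (x, y))
    (hvp : ∀ x y : ℝ, v (x + 1, y) = v (x, y))
    (hud : ∀ x : ℝ, Differentiable ℝ (fun y : ℝ => u (x, y)))
    (hvd : ∀ x : ℝ, Differentiable ℝ (fun y : ℝ => v (x, y)))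
    (hueq : ∀ x y : ℝ, deriv (fun y : ℝ => u (x, y)) y + (y : ℂ) * u (x, y) = 0)
    (hveq : ∀ x y : ℝ, deriv (fun y : ℝ => v (x, y)) y - (y : ℂ) * v (x, y) = 0)
    (hL2 : IntegrableOn (fun p : ℝ × ℝ => ‖u p‖ ^ 2 + ‖v p‖ ^ 2)
      (Set.Icc (0 : ℝ) 1 ×ˢ (Set.univ : Set ℝ)) volume) :
    (∀ p : ℝ × ℝ, v p = 0) ∧
      ∀ x y : ℝ, u (x, y) = u (x, 0) * Complex.exp (-(y : ℂ) ^ 2 / 2) :=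
  L2_kernel_deformed_dirac_on_cylinder_general u v hv hvp hud hvd hueq hveq hL2
end

section
/- Let A be an invertible symmetric real n × n matrix and let Θ be a real n × n matrix with Θ·Θ = 1 and Θ·A = −A·Θ. Let S be the positive-definite square root of A² (which exists since A² = AᵀA is positive definite). Then S is invertible, S⁻¹ commutes with A, and the matrix J := Θ·S⁻¹·A satisfies J·J = −1, i.e. J is a complex structure on ℝⁿ. -/
/-!
`S` is the square root of `S * S = A * A` in the continuous functional calculus, so everything
commuting with `A * A` commutes with `S`: both `A` and `Θ`, which anticommutes with `A`.
Hence `x := S⁻¹ * A` satisfies `x * x = S⁻² * A² = 1`, and `Θ` anticommutes with `x`,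
so `(Θ * x) * (Θ * x) = -(Θ * Θ) * (x * x) = -1`.
-/

open Matrix

theorem commute_mul_self_of_mul_eq_neg_mul {R : Type*} [Ring R] {θ a : R}
    (h : θ * a = -(a * θ)) : Commute θ (a * a) :=
  calc θ * (a * a) = (θ * a) * a := (mul_assoc ..).symm
    _ = -(a * θ * a) := by rw [h, neg_mul]
    _ = a * a * θ := by rw [mul_assoc a θ, h, mul_neg, neg_neg, mul_assoc]

theorem mul_self_eq_neg_one_of_mul_eq_neg_mul {R : Type*} [Ring R] {θ x : R}
    (hθ : θ * θ = 1) (hx : x * x = 1) (h : θ * x = -(x * θ)) : (θ * x) * (θ * x) = -1 :=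
  calc (θ * x) * (θ * x) = θ * (x * θ) * x := by simp only [mul_assoc]
    _ = -((θ * θ) * (x * x)) := by rw [← neg_neg (x * θ), ← h]; noncomm_ring
    _ = -1 := by rw [hθ, hx, one_mul]

namespace CFC

variable {A : Type*} [PartialOrder A] [NonUnitalRing A] [TopologicalSpace A] [StarRing A]
  [Module ℝ A] [SMulCommClass ℝ A A] [IsScalarTower ℝ A A] [StarOrderedRing A]
  [NonUnitalContinuousFunctionalCalculus ℝ A IsSelfAdjoint] [NonnegSpectrumClass ℝ A]
  [IsTopologicalRing A] [T2Space A]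

/-- `s = sqrt (s * s)` is given by the functional calculus of `s * s`. -/
theorem commute_of_commute_mul_self {s b : A} (hs : 0 ≤ s) (h : Commute (s * s) b) :
    Commute s b := by
  rw [← sqrt_mul_self s hs]
  exact h.cfcₙ_nnreal _

end CFC

namespace Matrix

variable {n R : Type*} [Fintype n] [DecidableEq n] [CommRing R]

theorem commute_nonsing_inv_left {s a : Matrix n n R} (h : Commute s a) : Commute s⁻¹ a := by
  simpa only [zpow_neg_one] using Matrix.Commute.zpow_left h (-1)

open scoped ComplexOrder in
theorem PosSemidef.commute_of_commute_mul_self {𝕜 : Type*} [RCLike 𝕜] {s b : Matrix n n 𝕜}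
    (hs : s.PosSemidef) (h : Commute (s * s) b) : Commute s b :=
  open scoped MatrixOrder in CFC.commute_of_commute_mul_self hs.nonneg h

theorem nonsing_inv_mul_mul_self_of_mul_self_eq {s a : Matrix n n R} (hs : IsUnit s)
    (h : Commute s a) (hsa : s * s = a * a) : (s⁻¹ * a) * (s⁻¹ * a) = 1 := by
  have hdet : IsUnit s.det := (isUnit_iff_isUnit_det s).mp hs
  calc (s⁻¹ * a) * (s⁻¹ * a) = s⁻¹ * (s⁻¹ * (a * a)) := by
        rw [mul_assoc, ← mul_assoc a, ← (commute_nonsing_inv_left h).eq, mul_assoc]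
    _ = 1 := by rw [← hsa, nonsing_inv_mul_cancel_left _ _ hdet, nonsing_inv_mul _ hdet]

end Matrix

theorem complex_structure_from_involution_general (n : ℕ)
    (A Θ S : Matrix (Fin n) (Fin n) ℝ)
    (hΘ : Θ * Θ = 1) (hΘA : Θ * A = -(A * Θ))
    (hS : S.PosDef) (hSsq : S * S = A * A) :
    IsUnit S ∧ S⁻¹ * A = A * S⁻¹ ∧ (Θ * S⁻¹ * A) * (Θ * S⁻¹ * A) = -1 := by
  have hSA : Commute S A :=
    hS.posSemidef.commute_of_commute_mul_self (hSsq ▸ (Commute.refl A).mul_left (Commute.refl A))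
  have hSΘ : Commute S Θ :=
    hS.posSemidef.commute_of_commute_mul_self
      (hSsq ▸ (commute_mul_self_of_mul_eq_neg_mul hΘA).symm)
  have hx : (S⁻¹ * A) * (S⁻¹ * A) = 1 :=
    nonsing_inv_mul_mul_self_of_mul_self_eq hS.isUnit hSA hSsq
  have hΘx : Θ * (S⁻¹ * A) = -((S⁻¹ * A) * Θ) := by
    rw [← mul_assoc, ← (commute_nonsing_inv_left hSΘ).eq, mul_assoc, hΘA, mul_assoc, mul_neg]
  refine ⟨hS.isUnit, (commute_nonsing_inv_left hSA).eq, ?_⟩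
  simpa only [mul_assoc] using mul_self_eq_neg_one_of_mul_eq_neg_mul hΘ hx hΘx

/-- **Subsection 3.4 of the paper.** Let `A` be an invertible symmetric real
`n × n` matrix and `Θ` a real `n × n` matrix with `Θ·Θ = 1` and `Θ·A = −A·Θ`.  Let `S` be
the positive-definite square root of `A²`.  Then `S` is invertible, `S⁻¹` commutes with
`A`, and `J := Θ·S⁻¹·A` satisfies `J·J = −1`, i.e. `J` is a complex structure on `ℝⁿ`. -/
theorem complex_structure_from_involution (n : ℕ)
    (A Θ S : Matrix (Fin n) (Fin n) ℝ)
    (hA : A.IsSymm) (hAinv : IsUnit A)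
    (hΘ : Θ * Θ = 1) (hΘA : Θ * A = -(A * Θ))
    (hS : S.PosDef) (hSsq : S * S = A * A) :
    IsUnit S ∧ S⁻¹ * A = A * S⁻¹ ∧ (Θ * S⁻¹ * A) * (Θ * S⁻¹ * A) = -1 :=
  complex_structure_from_involution_general n A Θ S hΘ hΘA hS hSsq
end
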